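/- arXiv:2407.07001 — 4 statements merged into one kernel-verified Lean document; each statement's English description precedes it below -/
import Mathlib

section
/- Let d ≥ 1 be an integer, let a > 0, b > 0, let k ≥ 0 and m ≥ 0 be real numbers with k + m > d, and let x ∈ ℝ^d with x ≠ 0. Set R = max{|x|, a, b} and I = ∫_{ℝ^d} dz / ((|z|+a)^k (|z−x|+b)^m). Then there is a constant C depending only on d, k, m such that I ≤ C [ R^{d−k−m} + δ_{k=d} R^{−m} log(R/a) + δ_{m=d} R^{−k} log(R/b) + 𝟙_{k>d} R^{−m} a^{d−k} + 𝟙_{m>d} R^{−k} b^{d−m} ]. -/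
open Real MeasureTheory Set Module

/-!
Write `u = ‖z‖` and `v = ‖z - x‖`. Since `R ≤ u + v + a + b`, if `u + a ≤ v + b` then
`u + R ≤ 3 (v + b)`, and symmetrically; hence the integrand is dominated by
`3^m (u + a)^(-k) (u + R)^(-m) + 3^k (v + b)^(-m) (v + R)^(-k)`, a sum of two radial functions (the
second centred at `x`). In polar coordinates each becomes `∫₀^∞ r^(d-1) (r + a)^(-k) (r + R)^(-m) dr`,
which is split at `R`: beyond `R` the integrand is at most `r^(d-1-k-m)`, giving `R^(d-k-m)`; below
`R` it is at most `R^(-m) (r + a)^(d-1-k)`, whose integral gives a power of `R`, `log (R / a)` or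
`a^(d-k)` according as `k < d`, `k = d` or `k > d`.
-/

lemma one_div_rpow_mul_rpow_le_of_le {k m s t S c : ℝ} (hm : 0 ≤ m) (hs : 0 < s) (hS : 0 < S)
    (hc : 0 < c) (ht : 0 < t) (hSt : S ≤ c * t) :
    1 / (s ^ k * t ^ m) ≤ c ^ m * (1 / (s ^ k * S ^ m)) := by
  have hSm : S ^ m ≤ c ^ m * t ^ m := by
    rw [← mul_rpow hc.le ht.le]
    exact rpow_le_rpow hS.le hSt hm
  rw [mul_one_div, div_le_div_iff₀ (by positivity) (by positivity)]
  calc 1 * (s ^ k * S ^ m) ≤ s ^ k * (c ^ m * t ^ m) := by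
        rw [one_mul]; gcongr
    _ = c ^ m * (s ^ k * t ^ m) := by ring

lemma one_div_rpow_mul_rpow_le_add {k m s t S T : ℝ} (hk : 0 ≤ k) (hm : 0 ≤ m) (hs : 0 < s)
    (ht : 0 < t) (hS : 0 < S) (hT : 0 < T) (hSst : S ≤ 2 * s + t) (hTst : T ≤ s + 2 * t) :
    1 / (s ^ k * t ^ m) ≤ 3 ^ m * (1 / (s ^ k * S ^ m)) + 3 ^ k * (1 / (t ^ m * T ^ k)) := by
  rcases le_total s t with hst | hts
  · have := one_div_rpow_mul_rpow_le_of_le (k := k) hm hs hS three_pos ht (by linarith)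
    linarith [show 0 ≤ 3 ^ k * (1 / (t ^ m * T ^ k)) by positivity]
  · have := one_div_rpow_mul_rpow_le_of_le (k := m) hk ht hT three_pos hs (by linarith)
    rw [mul_comm (t ^ m)] at this
    linarith [show 0 ≤ 3 ^ m * (1 / (s ^ k * S ^ m)) by positivity]

lemma pow_sub_one_eq_rpow {n : ℕ} (hn : 0 < n) (r : ℝ) : r ^ (n - 1) = r ^ ((n : ℝ) - 1) := by
  rw [← Nat.cast_pred hn, rpow_natCast]

lemma exists_intervalIntegral_rpow_sub_one_le (q : ℝ) :
    ∃ C > 0, ∀ a R : ℝ, 0 < a → a ≤ R →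
      ∫ t in a..a + R, t ^ (q - 1) ≤
        C * (R ^ q + (if q = 0 then 1 else 0) * log (R / a) + (if q < 0 then 1 else 0) * a ^ q) := by
  rcases lt_trichotomy q 0 with hq | rfl | hq
  · refine ⟨1 / -q, by simpa using hq, fun a R ha haR => ?_⟩
    have hR : 0 < R := ha.trans_le haR
    rw [integral_rpow (Or.inr ⟨by linarith, notMem_uIcc_of_lt ha (by linarith)⟩), sub_add_cancel,
      if_neg hq.ne, if_pos hq, zero_mul, add_zero, one_mul, ← neg_div_neg_eq, neg_sub]
    calc (a ^ q - (a + R) ^ q) / -q ≤ a ^ q / -q := by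
          gcongr
          · linarith
          · linarith [rpow_nonneg (by linarith : 0 ≤ a + R) q]
      _ ≤ 1 / -q * (R ^ q + a ^ q) := by
          rw [one_div_mul_eq_div]
          gcongr
          · linarith
          · linarith [rpow_nonneg hR.le q]
  · refine ⟨1, one_pos, fun a R ha haR => ?_⟩
    have hR : 0 < R := ha.trans_le haR
    have hlog : log ((a + R) / a) ≤ 1 + log (R / a) := by
      calc log ((a + R) / a) ≤ log (2 * (R / a)) := by
            gcongr
            rw [add_div, div_self ha.ne']
            linarith [(one_le_div ha).2 haR]
        _ ≤ 1 + log (R / a) := by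
            rw [log_mul two_ne_zero (by positivity)]
            linarith [log_two_lt_d9]
    simpa [rpow_neg_one, integral_inv_of_pos ha (by linarith : 0 < a + R)] using hlog
  · refine ⟨2 ^ q / q, by positivity, fun a R ha haR => ?_⟩
    have hR : 0 < R := ha.trans_le haR
    rw [integral_rpow (Or.inl (by linarith)), sub_add_cancel, if_neg hq.ne', if_neg hq.not_gt,
      zero_mul, zero_mul, add_zero, add_zero]
    have h2R : (a + R) ^ q ≤ 2 ^ q * R ^ q := by
      rw [← mul_rpow two_pos.le hR.le]
      exact rpow_le_rpow (by linarith) (by linarith) hq.le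
    calc ((a + R) ^ q - a ^ q) / q ≤ 2 ^ q * R ^ q / q := by
          gcongr
          linarith [rpow_nonneg ha.le q]
      _ = 2 ^ q / q * R ^ q := by ring

section RadialProfile

variable {s k m a R : ℝ}

lemma rpow_mul_two_weights_le_near (hs : 1 ≤ s) (hm : 0 ≤ m) (ha : 0 < a) (hR : 0 < R)
    {r : ℝ} (hr : 0 ≤ r) :
    r ^ (s - 1) * (1 / ((r + a) ^ k * (r + R) ^ m)) ≤ R ^ (-m) * (r + a) ^ (s - 1 - k) := by
  have hra : 0 < r + a := by linarith
  calc r ^ (s - 1) * (1 / ((r + a) ^ k * (r + R) ^ m))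
      = r ^ (s - 1) * (r + a) ^ (-k) * (r + R) ^ (-m) := by
        rw [rpow_neg hra.le, rpow_neg (by linarith), one_div, mul_inv, mul_assoc]
    _ ≤ (r + a) ^ (s - 1) * (r + a) ^ (-k) * R ^ (-m) := by
        refine mul_le_mul (mul_le_mul_of_nonneg_right ?_ (by positivity))
          (rpow_le_rpow_of_nonpos hR (by linarith) (by linarith)) (by positivity) (by positivity)
        exact rpow_le_rpow hr (by linarith) (by linarith)
    _ = R ^ (-m) * (r + a) ^ (s - 1 - k) := by
        rw [← rpow_add hra, ← sub_eq_add_neg, mul_comm]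

lemma rpow_mul_two_weights_le_far (hk : 0 ≤ k) (hm : 0 ≤ m) (ha : 0 < a) (hR : 0 < R)
    {r : ℝ} (hr : 0 < r) :
    r ^ (s - 1) * (1 / ((r + a) ^ k * (r + R) ^ m)) ≤ r ^ (s - 1 - k - m) := by
  calc r ^ (s - 1) * (1 / ((r + a) ^ k * (r + R) ^ m))
      ≤ r ^ (s - 1) * (1 / (r ^ k * r ^ m)) := by
        gcongr
        · linarith
        · linarith
    _ = r ^ (s - 1 - k - m) := by
        rw [← rpow_add hr, one_div, ← rpow_neg hr.le, ← rpow_add hr]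
        ring_nf

lemma continuousOn_rpow_mul_two_weights (hs : 1 ≤ s) (ha : 0 < a) (hR : 0 < R) :
    ContinuousOn (fun r : ℝ => r ^ (s - 1) * (1 / ((r + a) ^ k * (r + R) ^ m))) (Ici 0) := by
  intro r (hr : 0 ≤ r)
  have hra : 0 < r + a := by linarith
  have hrR : 0 < r + R := by linarith
  apply ContinuousAt.continuousWithinAt
  apply ContinuousAt.mul (continuousAt_id.rpow_const (Or.inr (by linarith)))
  apply continuousAt_const.div _ (by positivity)
  exact ((continuousAt_id.add continuousAt_const).rpow_const (Or.inl hra.ne')).mul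
    ((continuousAt_id.add continuousAt_const).rpow_const (Or.inl hrR.ne'))

lemma integrableOn_Ioi_rpow_mul_two_weights (hs : 1 ≤ s) (hk : 0 ≤ k) (hm : 0 ≤ m)
    (hkm : s < k + m) (ha : 0 < a) (hR : 0 < R) :
    IntegrableOn (fun r : ℝ => r ^ (s - 1) * (1 / ((r + a) ^ k * (r + R) ^ m))) (Ioi 0) := by
  have hcont := continuousOn_rpow_mul_two_weights (k := k) (m := m) hs ha hR
  rw [← Ioc_union_Ioi_eq_Ioi hR.le]
  refine IntegrableOn.union ?_ ?_
  · exact (hcont.mono Icc_subset_Ici_self).integrableOn_Icc.mono_set Ioc_subset_Icc_self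
  · refine (integrableOn_Ioi_rpow_of_lt (a := s - 1 - k - m) (by linarith) hR).mono'
      ((hcont.mono (Ioi_subset_Ici hR.le)).aestronglyMeasurable measurableSet_Ioi) ?_
    filter_upwards [ae_restrict_mem measurableSet_Ioi] with r (hr : R < r)
    have hr0 : 0 < r := hR.trans hr
    rw [norm_of_nonneg (by positivity)]
    exact rpow_mul_two_weights_le_far hk hm ha hR hr0

lemma setIntegral_Ioc_rpow_mul_two_weights_le (hs : 1 ≤ s) (hk : 0 ≤ k) (hm : 0 ≤ m)
    (hkm : s < k + m) (ha : 0 < a) (hR : 0 < R) :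
    ∫ r in Ioc 0 R, r ^ (s - 1) * (1 / ((r + a) ^ k * (r + R) ^ m)) ≤
      R ^ (-m) * ∫ t in a..a + R, t ^ (s - k - 1) := by
  have hshift : ∫ r in Ioc 0 R, (r + a) ^ (s - 1 - k) = ∫ t in a..a + R, t ^ (s - k - 1) := by
    rw [← intervalIntegral.integral_of_le hR.le,
      intervalIntegral.integral_comp_add_right (fun t => t ^ (s - 1 - k)), zero_add, add_comm R,
      sub_right_comm]
  rw [← hshift, ← integral_const_mul]
  refine setIntegral_mono_on
    ((integrableOn_Ioi_rpow_mul_two_weights hs hk hm hkm ha hR).mono_set Ioc_subset_Ioi_self) ?_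
    measurableSet_Ioc fun r hr => rpow_mul_two_weights_le_near hs hm ha hR hr.1.le
  refine (ContinuousOn.integrableOn_Icc ?_).mono_set Ioc_subset_Icc_self
  exact continuousOn_const.mul (ContinuousOn.rpow_const (f := fun r => r + a) (by fun_prop)
    fun r hr => Or.inl (by linarith [hr.1] : 0 < r + a).ne')

lemma setIntegral_Ioi_rpow_mul_two_weights_le (hs : 1 ≤ s) (hk : 0 ≤ k) (hm : 0 ≤ m)
    (hkm : s < k + m) (ha : 0 < a) (hR : 0 < R) :
    ∫ r in Ioi R, r ^ (s - 1) * (1 / ((r + a) ^ k * (r + R) ^ m)) ≤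
      1 / (k + m - s) * R ^ (s - k - m) := by
  calc _ ≤ ∫ r in Ioi R, r ^ (s - 1 - k - m) :=
        setIntegral_mono_on
          ((integrableOn_Ioi_rpow_mul_two_weights hs hk hm hkm ha hR).mono_set
            (Ioi_subset_Ioi hR.le))
          (integrableOn_Ioi_rpow_of_lt (by linarith) hR) measurableSet_Ioi
          fun r hr => rpow_mul_two_weights_le_far hk hm ha hR (hR.trans hr)
    _ = _ := by
        rw [integral_Ioi_rpow_of_lt (by linarith) hR, ← neg_div_neg_eq, neg_neg]
        ring_nf

theorem exists_integral_Ioi_rpow_mul_two_weights_le (hs : 1 ≤ s) (hk : 0 ≤ k) (hm : 0 ≤ m)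
    (hkm : s < k + m) :
    ∃ C > 0, ∀ a R : ℝ, 0 < a → a ≤ R →
      ∫ r in Ioi 0, r ^ (s - 1) * (1 / ((r + a) ^ k * (r + R) ^ m)) ≤
        C * (R ^ (s - k - m) + (if k = s then 1 else 0) * R ^ (-m) * log (R / a)
          + (if s < k then 1 else 0) * R ^ (-m) * a ^ (s - k)) := by
  obtain ⟨C, hC, hprimitive⟩ := exists_intervalIntegral_rpow_sub_one_le (s - k)
  have hkms : 0 < k + m - s := by linarith
  refine ⟨C + 1 / (k + m - s), by positivity, fun a R ha haR => ?_⟩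
  have hR : 0 < R := ha.trans_le haR
  have hf := integrableOn_Ioi_rpow_mul_two_weights hs hk hm hkm ha hR
  have hbound := hprimitive a R ha haR
  simp only [sub_eq_zero, sub_neg, @eq_comm _ s k] at hbound
  have hlog : 0 ≤ log (R / a) := log_nonneg ((one_le_div ha).2 haR)
  have hRpow : R ^ (s - k - m) = R ^ (-m) * R ^ (s - k) := by
    rw [← rpow_add hR]; ring_nf
  set X := R ^ (s - k - m) + (if k = s then 1 else 0) * R ^ (-m) * log (R / a)
    + (if s < k then 1 else 0) * R ^ (-m) * a ^ (s - k)
  have hX : R ^ (s - k - m) ≤ X := by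
    have : 0 ≤ (if k = s then 1 else 0) * R ^ (-m) * log (R / a) := by positivity
    have : 0 ≤ (if s < k then 1 else 0) * R ^ (-m) * a ^ (s - k) := by positivity
    linarith
  rw [← Ioc_union_Ioi_eq_Ioi hR.le, setIntegral_union (Ioc_disjoint_Ioi le_rfl) measurableSet_Ioi
    (hf.mono_set Ioc_subset_Ioi_self) (hf.mono_set (Ioi_subset_Ioi hR.le))]
  calc _ ≤ R ^ (-m) * (C * (R ^ (s - k) + (if k = s then 1 else 0) * log (R / a)
        + (if s < k then 1 else 0) * a ^ (s - k))) + 1 / (k + m - s) * R ^ (s - k - m) := by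
        gcongr
        · exact (setIntegral_Ioc_rpow_mul_two_weights_le hs hk hm hkm ha hR).trans
            (mul_le_mul_of_nonneg_left hbound (by positivity))
        · exact setIntegral_Ioi_rpow_mul_two_weights_le hs hk hm hkm ha hR
    _ = C * X + 1 / (k + m - s) * R ^ (s - k - m) := by
        simp only [X, hRpow]; ring
    _ ≤ C * X + 1 / (k + m - s) * X := by gcongr
    _ = (C + 1 / (k + m - s)) * X := by ring

end RadialProfile

section Radial

variable {E : Type*} [NormedAddCommGroup E] [NormedSpace ℝ E] [FiniteDimensional ℝ E]
  [MeasurableSpace E] [BorelSpace E] [Nontrivial E] (μ : Measure E) [μ.IsAddHaarMeasure]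
  {k m : ℝ}

lemma integrable_two_weights_radial (hk : 0 ≤ k) (hm : 0 ≤ m) (hkm : (finrank ℝ E : ℝ) < k + m)
    {a R : ℝ} (ha : 0 < a) (hR : 0 < R) :
    Integrable (fun z : E => 1 / ((‖z‖ + a) ^ k * (‖z‖ + R) ^ m)) μ := by
  refine (integrable_fun_norm_addHaar μ (f := fun r => 1 / ((r + a) ^ k * (r + R) ^ m))).2 ?_
  simpa only [pow_sub_one_eq_rpow finrank_pos, smul_eq_mul] using
    integrableOn_Ioi_rpow_mul_two_weights (by exact_mod_cast finrank_pos) hk hm hkm ha hR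

theorem exists_integral_two_weights_radial_le (hk : 0 ≤ k) (hm : 0 ≤ m)
    (hkm : (finrank ℝ E : ℝ) < k + m) :
    ∃ C > 0, ∀ a R : ℝ, 0 < a → a ≤ R →
      ∫ z, 1 / ((‖z‖ + a) ^ k * (‖z‖ + R) ^ m) ∂μ ≤
        C * (R ^ ((finrank ℝ E : ℝ) - k - m)
          + (if k = finrank ℝ E then 1 else 0) * R ^ (-m) * log (R / a)
          + (if (finrank ℝ E : ℝ) < k then 1 else 0) * R ^ (-m) * a ^ ((finrank ℝ E : ℝ) - k)) := by
  obtain ⟨C, hC, hbound⟩ := exists_integral_Ioi_rpow_mul_two_weights_le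
    (by exact_mod_cast finrank_pos) hk hm hkm
  have hball : 0 < μ.real (Metric.ball 0 1) :=
    ENNReal.toReal_pos (Metric.measure_ball_pos μ 0 one_pos).ne' measure_ball_lt_top.ne
  have hdim : 0 < (finrank ℝ E : ℝ) := by exact_mod_cast finrank_pos
  refine ⟨finrank ℝ E * μ.real (Metric.ball 0 1) * C, by positivity, fun a R ha haR => ?_⟩
  rw [integral_fun_norm_addHaar μ fun r => 1 / ((r + a) ^ k * (r + R) ^ m)]
  simp only [pow_sub_one_eq_rpow finrank_pos, smul_eq_mul, nsmul_eq_mul]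
  rw [← mul_assoc, mul_assoc _ C]
  exact mul_le_mul_of_nonneg_left (hbound a R ha haR) (by positivity)

end Radial

lemma integral_two_weights_le_radial {E : Type*} [NormedAddCommGroup E] [MeasurableSpace E]
    [MeasurableAdd E] (μ : Measure E) [μ.IsAddRightInvariant] {k m a b R : ℝ} (hk : 0 ≤ k)
    (hm : 0 ≤ m) (ha : 0 < a) (hb : 0 < b) (hR : 0 < R) {x : E} (hRx : R ≤ ‖x‖ + a + b)
    (hg : Integrable (fun z : E => 1 / ((‖z‖ + a) ^ k * (‖z‖ + R) ^ m)) μ)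
    (hh : Integrable (fun z : E => 1 / ((‖z‖ + b) ^ m * (‖z‖ + R) ^ k)) μ) :
    ∫ z, 1 / ((‖z‖ + a) ^ k * (‖z - x‖ + b) ^ m) ∂μ ≤
      3 ^ m * ∫ z, 1 / ((‖z‖ + a) ^ k * (‖z‖ + R) ^ m) ∂μ
        + 3 ^ k * ∫ z, 1 / ((‖z‖ + b) ^ m * (‖z‖ + R) ^ k) ∂μ := by
  have hpointwise (z : E) : 1 / ((‖z‖ + a) ^ k * (‖z - x‖ + b) ^ m) ≤
      3 ^ m * (1 / ((‖z‖ + a) ^ k * (‖z‖ + R) ^ m))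
        + 3 ^ k * (1 / ((‖z - x‖ + b) ^ m * (‖z - x‖ + R) ^ k)) := by
    have hx : ‖x‖ ≤ ‖z‖ + ‖z - x‖ := by simpa using norm_sub_le z (z - x)
    have := norm_nonneg z
    have := norm_nonneg (z - x)
    exact one_div_rpow_mul_rpow_le_add hk hm (by positivity) (by positivity) (by positivity)
      (by positivity) (by linarith) (by linarith)
  calc _ ≤ ∫ z, 3 ^ m * (1 / ((‖z‖ + a) ^ k * (‖z‖ + R) ^ m))
        + 3 ^ k * (1 / ((‖z - x‖ + b) ^ m * (‖z - x‖ + R) ^ k)) ∂μ :=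
        integral_mono_of_nonneg (.of_forall fun z => by positivity)
          ((hg.const_mul _).add ((hh.comp_sub_right x).const_mul _)) (.of_forall hpointwise)
    _ = _ := by
        rw [integral_add (hg.const_mul _) ((hh.comp_sub_right x).const_mul _), integral_const_mul,
          integral_const_mul,
          integral_sub_right_eq_self (fun z => 1 / ((‖z‖ + b) ^ m * (‖z‖ + R) ^ k)) x]

/-- Lemma 2.2: For `d ≥ 1`, `a, b > 0`, `k, m ≥ 0` with `k + m > d`,
and `0 ≠ x ∈ ℝ^d`, with `R = max{|x|, a, b}`,
`∫_{ℝ^d} dz/((|z|+a)^k (|z-x|+b)^m) ≤ C [R^(d-k-m) + δ_{k=d} R^(-m) log(R/a)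
 + δ_{m=d} R^(-k) log(R/b) + 𝟙_{k>d} R^(-m) a^(d-k) + 𝟙_{m>d} R^(-k) b^(d-m)]`,
where `C = C(d,k,m)`. -/
theorem integral_two_weights_bound (d : ℕ) (hd : 1 ≤ d) (k m : ℝ) (hk : 0 ≤ k) (hm : 0 ≤ m)
    (hkm : (d : ℝ) < k + m) :
    ∃ C : ℝ, 0 < C ∧ ∀ (a b : ℝ), 0 < a → 0 < b →
      ∀ x : EuclideanSpace ℝ (Fin d), x ≠ 0 →
      (∫ z : EuclideanSpace ℝ (Fin d), 1 / ((‖z‖ + a) ^ k * (‖z - x‖ + b) ^ m)) ≤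
        C * ((max ‖x‖ (max a b)) ^ ((d : ℝ) - k - m)
          + (if k = (d : ℝ) then 1 else 0) * (max ‖x‖ (max a b)) ^ (-m) *
              Real.log (max ‖x‖ (max a b) / a)
          + (if m = (d : ℝ) then 1 else 0) * (max ‖x‖ (max a b)) ^ (-k) *
              Real.log (max ‖x‖ (max a b) / b)
          + (if (d : ℝ) < k then 1 else 0) * (max ‖x‖ (max a b)) ^ (-m) * a ^ ((d : ℝ) - k)
          + (if (d : ℝ) < m then 1 else 0) * (max ‖x‖ (max a b)) ^ (-k) * b ^ ((d : ℝ) - m)) := by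
  have : Nonempty (Fin d) := ⟨⟨0, hd⟩⟩
  have hdim : (finrank ℝ (EuclideanSpace ℝ (Fin d)) : ℝ) = d := by rw [finrank_euclideanSpace_fin]
  have hkm' : (finrank ℝ (EuclideanSpace ℝ (Fin d)) : ℝ) < k + m := by rwa [hdim]
  have hmk' : (finrank ℝ (EuclideanSpace ℝ (Fin d)) : ℝ) < m + k := by rwa [add_comm]
  obtain ⟨C₁, hC₁, H₁⟩ := exists_integral_two_weights_radial_le volume hk hm hkm'
  obtain ⟨C₂, hC₂, H₂⟩ := exists_integral_two_weights_radial_le volume hm hk hmk'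
  rw [hdim] at H₁ H₂
  rw [sub_sub, add_comm m k, ← sub_sub] at H₂
  refine ⟨3 ^ m * C₁ + 3 ^ k * C₂, by positivity, fun a b ha hb x _ => ?_⟩
  set R := max ‖x‖ (max a b)
  have haR : a ≤ R := (le_max_left a b).trans (le_max_right _ _)
  have hbR : b ≤ R := (le_max_right a b).trans (le_max_right _ _)
  have hR : 0 < R := ha.trans_le haR
  have hRx : R ≤ ‖x‖ + a + b := by
    have := norm_nonneg x
    exact max_le (by linarith) (max_le (by linarith) (by linarith))
  have hloga : 0 ≤ log (R / a) := log_nonneg ((one_le_div ha).2 haR)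
  have hlogb : 0 ≤ log (R / b) := log_nonneg ((one_le_div hb).2 hbR)
  calc _ ≤ _ := integral_two_weights_le_radial volume hk hm ha hb hR hRx
        (integrable_two_weights_radial volume hk hm hkm' ha hR)
        (integrable_two_weights_radial volume hm hk hmk' hb hR)
    _ ≤ _ := add_le_add (mul_le_mul_of_nonneg_left (H₁ a R ha haR) (by positivity))
        (mul_le_mul_of_nonneg_left (H₂ b R hb hbR) (by positivity))
    _ ≤ _ := by
        have : 0 ≤ 3 ^ m * C₁ * ((if m = (d : ℝ) then 1 else 0) * R ^ (-k) * log (R / b)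
          + (if (d : ℝ) < m then 1 else 0) * R ^ (-k) * b ^ ((d : ℝ) - m)) := by positivity
        have : 0 ≤ 3 ^ k * C₂ * ((if k = (d : ℝ) then 1 else 0) * R ^ (-m) * log (R / a)
          + (if (d : ℝ) < k then 1 else 0) * R ^ (-m) * a ^ ((d : ℝ) - k)) := by positivity
        linarith
end

section
/- Let k > 1 and m ≥ 0 be real numbers and let A > 0. Set R = A + 1. Then there is a constant C depending only on k and m such that ∫_0^∞ dz / ((z+A)^k (z+1)^m) ≤ C [ R^{−m} A^{1−k} + δ_{m=1} R^{−k} log R + 𝟙_{m>1} R^{−k} ]. -/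
/-! Split the integral at `z = A`. On `(0, A]` the factor `(z + A)^(-k)` is at most `A^(-k)`,
leaving `A^(-k) ∫_0^A (z + 1)^(-m)`; this is at most `A^(1-k)` when `A ≤ 1`, and for `A ≥ 1`
it is of order `A^(-k) R^(1-m)`, `A^(-k) log R` or `A^(-k)` according as `m < 1`, `m = 1` or
`m > 1`. On `(A, ∞)` the integrand is at most `z^(-k)`, and at most `z^(-k-m)`, which gives
`A^(1-k)` for `A ≤ 1` and `A^(1-k-m)` for `A ≥ 1`. Finally, for `A ≥ 1` we have `A ≤ R ≤ 2A`,
so powers of `A` may be traded for powers of `R`. -/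

open Real MeasureTheory Set

theorem integrableOn_of_nonneg_of_le {α : Type*} [MeasurableSpace α] {μ : Measure α}
    {f g : α → ℝ} {s : Set α} (hs : MeasurableSet s) (hf : Measurable f)
    (hg : IntegrableOn g s μ) (hfg : ∀ x ∈ s, 0 ≤ f x ∧ f x ≤ g x) : IntegrableOn f s μ :=
  hg.mono' hf.aestronglyMeasurable <| by
    filter_upwards [ae_restrict_mem hs] with x hx
    rw [Real.norm_of_nonneg (hfg x hx).1]
    exact (hfg x hx).2

theorem setIntegral_Ioi_le_of_le_rpow_neg {f : ℝ → ℝ} {a s : ℝ} (hs : 1 < s) (ha : 0 < a)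
    (hf : IntegrableOn f (Ioi a)) (hle : ∀ x ∈ Ioi a, f x ≤ x ^ (-s)) :
    ∫ x in Ioi a, f x ≤ a ^ (1 - s) / (s - 1) := by
  have hs' : -s < -1 := by linarith
  calc ∫ x in Ioi a, f x ≤ ∫ x in Ioi a, x ^ (-s) :=
        setIntegral_mono_on hf (integrableOn_Ioi_rpow_of_lt hs' ha) measurableSet_Ioi hle
    _ = a ^ (1 - s) / (s - 1) := by
        rw [integral_Ioi_rpow_of_lt hs' ha, neg_add_eq_sub, ← neg_div_neg_eq, neg_neg, neg_sub]

theorem intervalIntegrable_add_one_rpow {r A : ℝ} (hA : 0 ≤ A) :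
    IntervalIntegrable (fun z => (z + 1) ^ r) volume 0 A := by
  refine ContinuousOn.intervalIntegrable ((continuous_add_const 1).continuousOn.rpow_const ?_)
  rw [uIcc_of_le hA]
  exact fun z hz => Or.inl (by linarith [hz.1])

theorem integral_add_one_rpow {r A : ℝ} (hr : r ≠ -1) (hA : 0 ≤ A) :
    ∫ z in 0..A, (z + 1) ^ r = ((A + 1) ^ (r + 1) - 1) / (r + 1) := by
  rw [intervalIntegral.integral_comp_add_right (fun x => x ^ r), integral_rpow, zero_add, one_rpow]
  refine Or.inr ⟨hr, ?_⟩
  rw [uIcc_of_le (by linarith)]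
  exact fun h => by linarith [h.1]

theorem integral_add_one_inv {A : ℝ} (hA : 0 ≤ A) :
    ∫ z in 0..A, (z + 1)⁻¹ = Real.log (A + 1) := by
  rw [intervalIntegral.integral_comp_add_right (fun x => x⁻¹), zero_add,
    integral_inv_of_pos one_pos (by linarith), div_one]

theorem rpow_neg_le_two_rpow_mul_rpow_neg {x y s : ℝ} (hx : 0 < x) (hxy : x ≤ y)
    (hy : y ≤ 2 * x) (hs : 0 ≤ s) : x ^ (-s) ≤ 2 ^ s * y ^ (-s) :=
  calc x ^ (-s) = 2 ^ s * (2 * x) ^ (-s) := by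
        rw [mul_rpow zero_le_two hx.le, ← mul_assoc, ← rpow_add two_pos, add_neg_cancel,
          rpow_zero, one_mul]
    _ ≤ 2 ^ s * y ^ (-s) := mul_le_mul_of_nonneg_left
        (rpow_le_rpow_of_nonpos (hx.trans_le hxy) hy (neg_nonpos.2 hs)) (by positivity)

namespace OneDim

noncomputable def integrand (k m A z : ℝ) : ℝ := 1 / ((z + A) ^ k * (z + 1) ^ m)

noncomputable def majorant (k m A : ℝ) : ℝ :=
  (A + 1) ^ (-m) * A ^ (1 - k)
    + (if m = 1 then 1 else 0) * (A + 1) ^ (-k) * Real.log (A + 1)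
    + (if 1 < m then 1 else 0) * (A + 1) ^ (-k)

variable {k m A z : ℝ}

theorem integrand_eq (hz : 0 ≤ z) (hA : 0 ≤ A) :
    integrand k m A z = (z + A) ^ (-k) * (z + 1) ^ (-m) := by
  rw [integrand, rpow_neg (by positivity), rpow_neg (by positivity), one_div, mul_inv]

theorem measurable_integrand : Measurable (integrand k m A) := by
  unfold integrand; fun_prop

theorem integrand_nonneg (hz : 0 ≤ z) (hA : 0 ≤ A) : 0 ≤ integrand k m A z := by
  rw [integrand_eq hz hA]; positivity

theorem integrand_le_const_mul (hk : 0 ≤ k) (hz : 0 ≤ z) (hA : 0 < A) :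
    integrand k m A z ≤ A ^ (-k) * (z + 1) ^ (-m) := by
  rw [integrand_eq hz hA.le]
  exact mul_le_mul_of_nonneg_right
    (rpow_le_rpow_of_nonpos hA (by linarith) (neg_nonpos.2 hk)) (by positivity)

theorem integrand_le_rpow_neg_mul (hk : 0 ≤ k) (hz : 0 < z) (hA : 0 ≤ A) :
    integrand k m A z ≤ z ^ (-k) * (z + 1) ^ (-m) := by
  rw [integrand_eq hz.le hA]
  exact mul_le_mul_of_nonneg_right
    (rpow_le_rpow_of_nonpos hz (by linarith) (neg_nonpos.2 hk)) (by positivity)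

theorem integrand_le_rpow_neg (hk : 0 ≤ k) (hm : 0 ≤ m) (hz : 0 < z) (hA : 0 ≤ A) :
    integrand k m A z ≤ z ^ (-k) :=
  (integrand_le_rpow_neg_mul hk hz hA).trans <| mul_le_of_le_one_right (by positivity)
    (rpow_le_one_of_one_le_of_nonpos (by linarith) (neg_nonpos.2 hm))

theorem intervalIntegrable_integrand (hk : 0 ≤ k) (hA : 0 < A) :
    IntervalIntegrable (integrand k m A) volume 0 A := by
  have hg := (intervalIntegrable_add_one_rpow (r := -m) hA.le).const_mul (A ^ (-k))
  rw [intervalIntegrable_iff_integrableOn_Ioc_of_le hA.le] at hg ⊢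
  exact integrableOn_of_nonneg_of_le measurableSet_Ioc measurable_integrand hg
    fun z hz => ⟨integrand_nonneg hz.1.le hA.le, integrand_le_const_mul hk hz.1.le hA⟩

theorem integrableOn_Ioi_integrand (hk : 1 < k) (hm : 0 ≤ m) (hA : 0 < A) :
    IntegrableOn (integrand k m A) (Ioi A) :=
  integrableOn_of_nonneg_of_le measurableSet_Ioi measurable_integrand
    (integrableOn_Ioi_rpow_of_lt (neg_lt_neg hk) hA) fun z hz =>
      ⟨integrand_nonneg (hA.trans hz).le hA.le,
        integrand_le_rpow_neg (by linarith) hm (hA.trans hz) hA.le⟩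

theorem integral_integrand_eq_add (hk : 1 < k) (hm : 0 ≤ m) (hA : 0 < A) :
    ∫ z in Ioi 0, integrand k m A z =
      (∫ z in 0..A, integrand k m A z) + ∫ z in Ioi A, integrand k m A z := by
  have hhead := (intervalIntegrable_iff_integrableOn_Ioc_of_le hA.le).1
    (intervalIntegrable_integrand (k := k) (m := m) (by linarith) hA)
  rw [intervalIntegral.integral_of_le hA.le, ← setIntegral_union (Ioc_disjoint_Ioi le_rfl)
    measurableSet_Ioi hhead (integrableOn_Ioi_integrand hk hm hA), Ioc_union_Ioi_eq_Ioi hA.le]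

theorem intervalIntegral_integrand_le (hk : 0 ≤ k) (hA : 0 < A) :
    ∫ z in 0..A, integrand k m A z ≤ A ^ (-k) * ∫ z in 0..A, (z + 1) ^ (-m) := by
  rw [← intervalIntegral.integral_const_mul]
  exact intervalIntegral.integral_mono_on hA.le (intervalIntegrable_integrand hk hA)
    ((intervalIntegrable_add_one_rpow hA.le).const_mul _)
    fun z hz => integrand_le_const_mul hk hz.1 hA

theorem setIntegral_Ioi_integrand_le (hk : 1 < k) (hm : 0 ≤ m) (hA : 0 < A) :
    ∫ z in Ioi A, integrand k m A z ≤ A ^ (1 - k) / (k - 1) :=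
  setIntegral_Ioi_le_of_le_rpow_neg hk hA (integrableOn_Ioi_integrand hk hm hA) fun z hz =>
    integrand_le_rpow_neg (by linarith) hm (hA.trans hz) hA.le

theorem setIntegral_Ioi_integrand_le_add (hk : 1 < k) (hm : 0 ≤ m) (hA : 0 < A) :
    ∫ z in Ioi A, integrand k m A z ≤ A ^ (1 - (k + m)) / (k + m - 1) := by
  refine setIntegral_Ioi_le_of_le_rpow_neg (by linarith) hA
    (integrableOn_Ioi_integrand hk hm hA) fun z hz => ?_
  have hz0 : 0 < z := hA.trans hz
  rw [neg_add, rpow_add hz0]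
  exact (integrand_le_rpow_neg_mul (by linarith) hz0 hA.le).trans <| mul_le_mul_of_nonneg_left
    (rpow_le_rpow_of_nonpos hz0 (by linarith) (neg_nonpos.2 hm)) (by positivity)

theorem majorant_nonneg (hA : 0 < A) : 0 ≤ majorant k m A := by
  have := log_nonneg (by linarith : (1 : ℝ) ≤ A + 1)
  unfold majorant
  split_ifs <;> positivity

theorem rpow_mul_rpow_le_majorant (hA : 0 < A) :
    (A + 1) ^ (-m) * A ^ (1 - k) ≤ majorant k m A := by
  have := log_nonneg (by linarith : (1 : ℝ) ≤ A + 1)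
  have := rpow_nonneg (by linarith : (0 : ℝ) ≤ A + 1) (-k)
  unfold majorant
  split_ifs <;> nlinarith

theorem rpow_mul_log_le_majorant (hA : 0 < A) :
    (A + 1) ^ (-k) * log (A + 1) ≤ majorant k 1 A := by
  have := log_nonneg (by linarith : (1 : ℝ) ≤ A + 1)
  simp only [majorant, if_true, lt_irrefl, if_false, one_mul, zero_mul, add_zero]
  exact le_add_of_nonneg_left (by positivity)

theorem rpow_neg_le_majorant (hm : 1 < m) (hA : 0 < A) : (A + 1) ^ (-k) ≤ majorant k m A := by
  simp only [majorant, if_neg hm.ne', if_pos hm, one_mul, zero_mul, add_zero]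
  exact le_add_of_nonneg_left (by positivity)

theorem rpow_neg_mul_integral_le_of_lt_one (hm : m < 1) (hA : 1 ≤ A) :
    A ^ (-k) * ∫ z in 0..A, (z + 1) ^ (-m) ≤ 2 / (1 - m) * majorant k m A := by
  have hA0 : 0 < A := by linarith
  have hAk : A ^ (-k) * (A + 1) ≤ 2 * A ^ (1 - k) := by
    rw [sub_eq_add_neg, rpow_add hA0, rpow_one]
    nlinarith [rpow_pos_of_pos hA0 (-k)]
  rw [integral_add_one_rpow (by linarith) hA0.le, neg_add_eq_sub]
  calc A ^ (-k) * (((A + 1) ^ (1 - m) - 1) / (1 - m))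
      ≤ A ^ (-k) * ((A + 1) ^ (1 - m) / (1 - m)) := by gcongr; linarith
    _ = A ^ (-k) * (A + 1) / (1 - m) * (A + 1) ^ (-m) := by
        rw [sub_eq_add_neg 1 m, rpow_add (by linarith), rpow_one]; ring
    _ ≤ 2 * A ^ (1 - k) / (1 - m) * (A + 1) ^ (-m) := by gcongr
    _ = 2 / (1 - m) * ((A + 1) ^ (-m) * A ^ (1 - k)) := by ring
    _ ≤ 2 / (1 - m) * majorant k m A := by
        gcongr
        exact rpow_mul_rpow_le_majorant hA0

theorem rpow_neg_mul_integral_le_of_eq_one (hk : 0 ≤ k) (hA : 1 ≤ A) :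
    A ^ (-k) * ∫ z in 0..A, (z + 1) ^ (-1 : ℝ) ≤ 2 ^ k * majorant k 1 A := by
  have hA0 : 0 < A := by linarith
  simp only [rpow_neg_one]
  rw [integral_add_one_inv hA0.le]
  calc A ^ (-k) * log (A + 1) ≤ 2 ^ k * (A + 1) ^ (-k) * log (A + 1) :=
        mul_le_mul_of_nonneg_right (rpow_neg_le_two_rpow_mul_rpow_neg hA0 (by linarith)
          (by linarith) hk) (log_nonneg (by linarith))
    _ ≤ 2 ^ k * majorant k 1 A := by
        rw [mul_assoc]
        gcongr
        exact rpow_mul_log_le_majorant hA0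

theorem rpow_neg_mul_integral_le_of_one_lt (hk : 0 ≤ k) (hm : 1 < m) (hA : 1 ≤ A) :
    A ^ (-k) * ∫ z in 0..A, (z + 1) ^ (-m) ≤ 2 ^ k / (m - 1) * majorant k m A := by
  have hA0 : 0 < A := by linarith
  rw [integral_add_one_rpow (by linarith) hA0.le, ← neg_div_neg_eq, neg_sub, neg_add', neg_neg]
  calc A ^ (-k) * ((1 - (A + 1) ^ (-m + 1)) / (m - 1)) ≤ A ^ (-k) * (1 / (m - 1)) := by
        gcongr
        exact sub_le_self 1 (rpow_nonneg (by linarith) _)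
    _ ≤ 2 ^ k * (A + 1) ^ (-k) * (1 / (m - 1)) := by
        gcongr
        exact rpow_neg_le_two_rpow_mul_rpow_neg hA0 (by linarith) (by linarith) hk
    _ ≤ 2 ^ k / (m - 1) * majorant k m A := by
        rw [mul_one_div, mul_div_assoc, mul_comm_div]
        gcongr
        exact rpow_neg_le_majorant hm hA0

theorem integral_integrand_le_of_le_one (hk : 1 < k) (hm : 0 ≤ m) (hA : 0 < A) (hA1 : A ≤ 1) :
    ∫ z in Ioi 0, integrand k m A z ≤ 2 ^ m * (k / (k - 1)) * majorant k m A := by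
  have hk1 : 0 < k - 1 := by linarith
  have hJ : ∫ z in 0..A, (z + 1) ^ (-m) ≤ A := by
    calc ∫ z in 0..A, (z + 1) ^ (-m) ≤ ∫ _ in 0..A, (1 : ℝ) :=
          intervalIntegral.integral_mono_on hA.le (intervalIntegrable_add_one_rpow hA.le)
            intervalIntegrable_const fun z hz =>
              rpow_le_one_of_one_le_of_nonpos (by linarith [hz.1]) (neg_nonpos.2 hm)
      _ = A := by simp
  have hR : 1 ≤ 2 ^ m * (A + 1) ^ (-m) := by
    simpa using rpow_neg_le_two_rpow_mul_rpow_neg one_pos (by linarith) (by linarith) hm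
  calc ∫ z in Ioi 0, integrand k m A z
      ≤ A ^ (-k) * A + A ^ (1 - k) / (k - 1) := by
        rw [integral_integrand_eq_add hk hm hA]
        gcongr
        · exact (intervalIntegral_integrand_le (by linarith) hA).trans (by gcongr)
        · exact setIntegral_Ioi_integrand_le hk hm hA
    _ = k / (k - 1) * A ^ (1 - k) := by
        rw [sub_eq_add_neg 1 k, rpow_add hA, rpow_one]
        field_simp
        ring
    _ ≤ k / (k - 1) * A ^ (1 - k) * (2 ^ m * (A + 1) ^ (-m)) :=
        le_mul_of_one_le_right (by positivity) hR
    _ = 2 ^ m * (k / (k - 1)) * ((A + 1) ^ (-m) * A ^ (1 - k)) := by ring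
    _ ≤ 2 ^ m * (k / (k - 1)) * majorant k m A := by
        gcongr
        exact rpow_mul_rpow_le_majorant hA

theorem setIntegral_Ioi_integrand_le_majorant (hk : 1 < k) (hm : 0 ≤ m) (hA : 1 ≤ A) :
    ∫ z in Ioi A, integrand k m A z ≤ 2 ^ m / (k + m - 1) * majorant k m A := by
  have hA0 : 0 < A := by linarith
  have hkm : 0 < k + m - 1 := by linarith
  calc ∫ z in Ioi A, integrand k m A z ≤ A ^ (1 - (k + m)) / (k + m - 1) :=
        setIntegral_Ioi_integrand_le_add hk hm hA0
    _ = A ^ (-m) * A ^ (1 - k) / (k + m - 1) := by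
        rw [← rpow_add hA0]; ring_nf
    _ ≤ 2 ^ m * (A + 1) ^ (-m) * A ^ (1 - k) / (k + m - 1) :=
        div_le_div_of_nonneg_right (mul_le_mul_of_nonneg_right
          (rpow_neg_le_two_rpow_mul_rpow_neg hA0 (by linarith) (by linarith) hm) (by positivity))
          hkm.le
    _ ≤ 2 ^ m / (k + m - 1) * majorant k m A := by
        rw [mul_assoc, mul_div_right_comm]
        exact mul_le_mul_of_nonneg_left (rpow_mul_rpow_le_majorant hA0) (by positivity)

theorem exists_rpow_neg_mul_integral_le (hk : 0 ≤ k) : ∃ c, 0 < c ∧ ∀ A, 1 ≤ A →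
    A ^ (-k) * ∫ z in 0..A, (z + 1) ^ (-m) ≤ c * majorant k m A := by
  rcases lt_trichotomy m 1 with hm1 | rfl | hm1
  · exact ⟨2 / (1 - m), div_pos two_pos (by linarith),
      fun A hA => rpow_neg_mul_integral_le_of_lt_one hm1 hA⟩
  · exact ⟨2 ^ k, by positivity, fun A hA => rpow_neg_mul_integral_le_of_eq_one hk hA⟩
  · exact ⟨2 ^ k / (m - 1), div_pos (by positivity) (by linarith),
      fun A hA => rpow_neg_mul_integral_le_of_one_lt hk hm1 hA⟩

theorem exists_integral_integrand_le_of_one_le (hk : 1 < k) (hm : 0 ≤ m) :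
    ∃ C, 0 < C ∧ ∀ A, 1 ≤ A → ∫ z in Ioi 0, integrand k m A z ≤ C * majorant k m A := by
  obtain ⟨c, hc, hhead⟩ := exists_rpow_neg_mul_integral_le (m := m) (by linarith : 0 ≤ k)
  have hkm : 0 < k + m - 1 := by linarith
  refine ⟨c + 2 ^ m / (k + m - 1), by positivity, fun A hA => ?_⟩
  rw [integral_integrand_eq_add hk hm (by linarith), add_mul]
  exact add_le_add ((intervalIntegral_integrand_le (by linarith) (by linarith)).trans (hhead A hA))
    (setIntegral_Ioi_integrand_le_majorant hk hm hA)

end OneDim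

/-- estimate (lemma2.2d1) of Lemma 2.2: For `k > 1`, `m ≥ 0`, `A > 0`,
with `R = A + 1`,
`∫_0^∞ dz/((z+A)^k (z+1)^m) ≤ C [R^(-m) A^(1-k) + δ_{m=1} R^(-k) log R + 𝟙_{m>1} R^(-k)]`,
where `C = C(k,m)`. -/
theorem integral_one_dim_bound (k m : ℝ) (hk : 1 < k) (hm : 0 ≤ m) :
    ∃ C : ℝ, 0 < C ∧ ∀ A : ℝ, 0 < A →
      (∫ z in Set.Ioi (0:ℝ), 1 / ((z + A) ^ k * (z + 1) ^ m)) ≤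
        C * ((A + 1) ^ (-m) * A ^ (1 - k)
          + (if m = 1 then 1 else 0) * (A + 1) ^ (-k) * Real.log (A + 1)
          + (if 1 < m then 1 else 0) * (A + 1) ^ (-k)) := by
  obtain ⟨C, hC, hlarge⟩ := OneDim.exists_integral_integrand_le_of_one_le hk hm
  refine ⟨max (2 ^ m * (k / (k - 1))) C, lt_max_of_lt_right hC, fun A hA => ?_⟩
  have hmaj : 0 ≤ OneDim.majorant k m A := OneDim.majorant_nonneg hA
  rcases le_total A 1 with hA1 | hA1
  · exact (OneDim.integral_integrand_le_of_le_one hk hm hA hA1).trans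
      (mul_le_mul_of_nonneg_right (le_max_left _ _) hmaj)
  · exact (hlarge A hA1).trans (mul_le_mul_of_nonneg_right (le_max_right _ _) hmaj)
end

section
/- Let k ≥ 0 be a real number and c > 0. Then there is a constant C depending only on k and c such that for all r > 0 and t > 0, t^{−k/2} e^{−r²/(c t)} log(2 + r) ≤ C (r + √t)^{−k} log(2 + t). -/
open Real

/-! Put `x = r / √t`. Then `t ^ (-k/2) = √t ^ (-k)` and
`(r + √t) ^ (-k) = √t ^ (-k) (1 + x) ^ (-k)`, so it suffices to bound
`(1 + x) ^ k e^(-x²/c) log (2 + r)` by a multiple of `log (2 + t)`. From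
`2 + r ≤ (2 + x)(2 + √t)` we get `log (2 + r) ≤ 2 (2 + x) log (2 + t)`, and the Gaussian factor
absorbs the polynomial one: `(1 + x) ^ k (2 + x) ≤ 2 e^((k+1)x)` and
`(k+1)x - x²/c ≤ c(k+1)²/4`. -/

namespace Real

lemma one_add_rpow_le_exp_mul {x k : ℝ} (hx : -1 ≤ x) (hk : 0 ≤ k) :
    (1 + x) ^ k ≤ exp (k * x) := by
  calc (1 + x) ^ k ≤ exp x ^ k := by
        gcongr
        · linarith
        · linarith [add_one_le_exp x]
    _ = exp (k * x) := by rw [← exp_mul, mul_comm]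

lemma mul_sub_sq_div_le {c : ℝ} (hc : 0 < c) (a x : ℝ) :
    a * x - x ^ 2 / c ≤ c * a ^ 2 / 4 := by
  have hsq : (x - c * a / 2) ^ 2 / c = x ^ 2 / c - a * x + c * a ^ 2 / 4 := by
    field_simp
    ring
  have : 0 ≤ (x - c * a / 2) ^ 2 / c := by positivity
  linarith

lemma two_add_mul_exp_neg_sq_div_le {k c x : ℝ} (hk : 0 ≤ k) (hc : 0 < c) (hx : 0 ≤ x) :
    (2 + x) * exp (-x ^ 2 / c) ≤ 2 * exp (c * (k + 1) ^ 2 / 4) * (1 + x) ^ (-k) := by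
  have h1x : 0 < 1 + x := by linarith
  have h2x : 2 + x ≤ 2 * exp x := by linarith [add_one_le_exp x, one_le_exp hx]
  rw [rpow_neg h1x.le, ← div_eq_mul_inv, le_div_iff₀ (by positivity)]
  calc (2 + x) * exp (-x ^ 2 / c) * (1 + x) ^ k
      ≤ 2 * exp x * exp (-x ^ 2 / c) * exp (k * x) := by
        gcongr
        exact one_add_rpow_le_exp_mul (by linarith) hk
    _ = 2 * exp ((k + 1) * x - x ^ 2 / c) := by
        rw [show (k + 1) * x - x ^ 2 / c = x + -x ^ 2 / c + k * x by ring, exp_add, exp_add]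
        ring
    _ ≤ 2 * exp (c * (k + 1) ^ 2 / 4) := by
        gcongr
        exact mul_sub_sq_div_le hc _ x

lemma log_two_add_mul_le_add {a b : ℝ} (ha : 0 ≤ a) (hb : 0 ≤ b) :
    log (2 + a * b) ≤ log (2 + a) + log (2 + b) := by
  rw [← log_mul (by positivity) (by positivity)]
  exact log_le_log (by positivity) (by nlinarith)

lemma log_two_add_sqrt_le {t : ℝ} (ht : 0 ≤ t) : log (2 + √t) ≤ 2 * log (2 + t) := by
  calc log (2 + √t) ≤ log ((2 + t) ^ 2) :=
        log_le_log (by positivity) (by nlinarith [sq_sqrt ht, sqrt_nonneg t, sq_nonneg (√t - 1)])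
    _ = 2 * log (2 + t) := by rw [log_pow]; norm_num

lemma log_two_add_le_mul_log {r t : ℝ} (hr : 0 ≤ r) (ht : 0 < t) :
    log (2 + r) ≤ 2 * (2 + r / √t) * log (2 + t) := by
  have hs : 0 < √t := sqrt_pos.2 ht
  have hx : 0 ≤ r / √t := by positivity
  have hlog : 1 / 2 < log (2 + t) := by
    linarith [log_two_gt_d9, log_le_log two_pos (by linarith : (2 : ℝ) ≤ 2 + t)]
  calc log (2 + r) = log (2 + r / √t * √t) := by rw [div_mul_cancel₀ r hs.ne']
    _ ≤ log (2 + r / √t) + log (2 + √t) := log_two_add_mul_le_add hx hs.le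
    _ ≤ (1 + r / √t) + 2 * log (2 + t) := by
        gcongr ?_ + ?_
        · linarith [log_le_sub_one_of_pos (by positivity : 0 < 2 + r / √t)]
        · exact log_two_add_sqrt_le ht.le
    _ ≤ 2 * (2 + r / √t) * log (2 + t) := by nlinarith

end Real

/-- Lemma 3.3, lem-logxt: For `k ≥ 0` and `c > 0` there is `C = C(k,c)`
such that for all `r, t > 0`,
`t^(-k/2) e^(-r²/(ct)) log(2+r) ≤ C (r+√t)^(-k) log(2+t)`. -/
theorem log_heat_decay (k c : ℝ) (hk : 0 ≤ k) (hc : 0 < c) :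
    ∃ C : ℝ, 0 < C ∧ ∀ r t : ℝ, 0 < r → 0 < t →
      t ^ (-k / 2) * Real.exp (-r ^ 2 / (c * t)) * Real.log (2 + r) ≤
        C * (r + Real.sqrt t) ^ (-k) * Real.log (2 + t) := by
  refine ⟨4 * exp (c * (k + 1) ^ 2 / 4), by positivity, fun r t hr ht => ?_⟩
  have hs : 0 < √t := sqrt_pos.2 ht
  have hpow : t ^ (-k / 2) = √t ^ (-k) := by
    rw [sqrt_eq_rpow, ← rpow_mul ht.le]
    ring_nf
  have hsum : (r + √t) ^ (-k) = √t ^ (-k) * (1 + r / √t) ^ (-k) := by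
    rw [← mul_rpow hs.le (by positivity), mul_add, mul_div_cancel₀ r hs.ne', mul_one, add_comm]
  have hgauss : -r ^ 2 / (c * t) = -(r / √t) ^ 2 / c := by
    rw [div_pow, sq_sqrt ht.le]
    field_simp
  have hlog : 0 ≤ log (2 + t) := log_nonneg (by linarith)
  rw [hpow, hsum, hgauss]
  calc √t ^ (-k) * exp (-(r / √t) ^ 2 / c) * log (2 + r)
      ≤ √t ^ (-k) * exp (-(r / √t) ^ 2 / c) * (2 * (2 + r / √t) * log (2 + t)) := by
        gcongr
        exact log_two_add_le_mul_log hr.le ht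
    _ = 2 * √t ^ (-k) * ((2 + r / √t) * exp (-(r / √t) ^ 2 / c)) * log (2 + t) := by ring
    _ ≤ 2 * √t ^ (-k) * (2 * exp (c * (k + 1) ^ 2 / 4) * (1 + r / √t) ^ (-k)) *
          log (2 + t) := by
        gcongr 2 * _ * ?_ * _
        exact two_add_mul_exp_neg_sq_div_le hk hc (by positivity)
    _ = 4 * exp (c * (k + 1) ^ 2 / 4) * (√t ^ (-k) * (1 + r / √t) ^ (-k)) * log (2 + t) := by
        ring
end

section
/- Let n ≥ 2 and 0 ≤ a ≤ n. Then there is a constant C depending only on n and a such that for all x ∈ ℝ^n_+ and t > 0, ∫_{ℝ^n_+} (|x−y| + √t)^{−(n+1)} ⟨y⟩^{−2a} dy ≤ C t^{−1/2} (|x| + √t + 1)^{−a}. -/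
open MeasureTheory Real Set
open scoped ENNReal

noncomputable section

/-- `ℝⁿ` as a Euclidean space. -/
abbrev Rn (n : ℕ) : Type := EuclideanSpace ℝ (Fin n)

/-- The index of the last coordinate. -/
def lastIdx (n : ℕ) (hn : 0 < n := by omega) : Fin n := ⟨n - 1, by omega⟩

/-- The open half space `ℝⁿ₊ = {x : xₙ > 0}`. -/
def halfSpace (n : ℕ) (hn : 0 < n := by omega) : Set (Rn n) :=
  {x : Rn n | 0 < x (lastIdx n)}

/-- The reflection `x* = (x', -xₙ)`. -/
def reflect (n : ℕ) (x : Rn n) (hn : 0 < n := by omega) : Rn n :=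
  WithLp.toLp 2 (fun i => if i = lastIdx n then -(x i) else x i)

/-- The heat kernel `Γ(x,t) = (4πt)^(-n/2) e^(-|x|²/(4t))` for `t > 0` (and `0` for `t ≤ 0`). -/
def heatKernel (n : ℕ) (x : Rn n) (t : ℝ) : ℝ :=
  if 0 < t then (4 * π * t) ^ (-(n : ℝ) / 2) * Real.exp (-‖x‖ ^ 2 / (4 * t)) else 0

/-- The Neumann Green function `G^N(x,y,t) = Γ(x−y,t) + Γ(x−y*,t)` of the heat equation
in the half space. -/
def GN (n : ℕ) (x y : Rn n) (t : ℝ) (hn : 0 < n := by omega) : ℝ :=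
  heatKernel n (x - y) t + heatKernel n (x - reflect n y) t

/-- The Dirichlet Green function `G^D(x,y,t) = Γ(x−y,t) − Γ(x−y*,t)` of the heat equation
in the half space. -/
def GD (n : ℕ) (x y : Rn n) (t : ℝ) (hn : 0 < n := by omega) : ℝ :=
  heatKernel n (x - y) t - heatKernel n (x - reflect n y) t

/-!
Write `s = √t`, `K(y) = (‖x - y‖ + s)^(-(n+1))` and `X = ‖x‖ + s + 1`; by scaling, `∫ K` is a
constant times `s⁻¹`. For `a = n`, every `y` has `1 + ‖y‖ ≥ X / 2` or `‖x - y‖ + s ≥ X / 2`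
(triangle inequality): in the first case `⟨y⟩^(-2n) ≲ X^(-n)`, in the second `K(y) ≲ X^(-n) s⁻¹`,
and `⟨y⟩^(-2n)` is integrable. For `0 ≤ a ≤ n` and `θ = a / n`, Hölder's inequality applied to
`K ⟨y⟩^(-2a) = K^(1-θ) (K ⟨y⟩^(-2n))^θ` interpolates between this and the trivial case `a = 0`.
The integral over the half space is bounded by the one over `ℝⁿ`.
-/

section Interpolation

variable {α : Type*} [MeasurableSpace α] {μ : Measure α} {f g : α → ℝ}

theorem integral_rpow_mul_rpow_le (hf0 : 0 ≤ᵐ[μ] f) (hg0 : 0 ≤ᵐ[μ] g)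
    (hf : Integrable f μ) (hg : Integrable g μ) {p q : ℝ} (hp : 0 ≤ p) (hq : 0 ≤ q)
    (hpq : p + q = 1) :
    ∫ x, f x ^ p * g x ^ q ∂μ ≤ (∫ x, f x ∂μ) ^ p * (∫ x, g x ∂μ) ^ q := by
  have hfg0 : 0 ≤ᵐ[μ] fun x ↦ f x ^ p * g x ^ q := by
    filter_upwards [hf0, hg0] with x hfx hgx
    exact mul_nonneg (rpow_nonneg hfx p) (rpow_nonneg hgx q)
  have hfgm : AEStronglyMeasurable (fun x ↦ f x ^ p * g x ^ q) μ :=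
    ((hf.aemeasurable.pow_const p).mul (hg.aemeasurable.pow_const q)).aestronglyMeasurable
  have hofReal : (fun x ↦ ENNReal.ofReal (f x ^ p * g x ^ q)) =ᵐ[μ]
      fun x ↦ ENNReal.ofReal (f x) ^ p * ENNReal.ofReal (g x) ^ q := by
    filter_upwards [hf0, hg0] with x hfx hgx
    rw [ENNReal.ofReal_mul (rpow_nonneg hfx p), ENNReal.ofReal_rpow_of_nonneg hfx hp,
      ENNReal.ofReal_rpow_of_nonneg hgx hq]
  rw [integral_eq_lintegral_of_nonneg_ae hfg0 hfgm, integral_eq_lintegral_of_nonneg_ae hf0 hf.1,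
    integral_eq_lintegral_of_nonneg_ae hg0 hg.1, lintegral_congr_ae hofReal,
    ENNReal.toReal_rpow, ENNReal.toReal_rpow, ← ENNReal.toReal_mul]
  refine ENNReal.toReal_mono ?_ (ENNReal.lintegral_mul_norm_pow_le
    hf.aemeasurable.ennreal_ofReal hg.aemeasurable.ennreal_ofReal hp hq hpq)
  exact ENNReal.mul_ne_top (ENNReal.rpow_ne_top_of_nonneg hp hf.lintegral_lt_top.ne)
    (ENNReal.rpow_ne_top_of_nonneg hq hg.lintegral_lt_top.ne)

end Interpolation

section Pointwise

lemma one_add_sq_rpow_neg_le {u X d : ℝ} (hd : 0 ≤ d) (hX : 1 ≤ X) (h : X ≤ 2 * (1 + u)) :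
    (1 + u ^ 2) ^ (-d) ≤ 8 ^ d * X ^ (-d) := by
  have hX8 : X ≤ 8 * (1 + u ^ 2) := by
    nlinarith [sq_nonneg (u - 1), mul_le_mul h h (by linarith) (by linarith)]
  calc (1 + u ^ 2) ^ (-d) = 8 ^ d * (8 * (1 + u ^ 2)) ^ (-d) := by
        rw [mul_rpow (by norm_num) (by positivity), rpow_neg (by norm_num : (0 : ℝ) ≤ 8),
          mul_inv_cancel_left₀ (by positivity)]
    _ ≤ 8 ^ d * X ^ (-d) :=
        mul_le_mul_of_nonneg_left (rpow_le_rpow_of_nonpos (by linarith) hX8 (neg_nonpos.2 hd))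
          (by positivity)

lemma rpow_neg_add_one_le {r s X d : ℝ} (hd : 0 ≤ d) (hs : 0 < s) (hsr : s ≤ r) (hX : 0 < X)
    (h : X ≤ 2 * r) : r ^ (-(d + 1)) ≤ 2 ^ d * X ^ (-d) * s⁻¹ := by
  have hr : 0 < r := hs.trans_le hsr
  calc r ^ (-(d + 1)) = 2 ^ d * (2 * r) ^ (-d) * r⁻¹ := by
        rw [neg_add, rpow_add hr, rpow_neg_one, mul_rpow (by norm_num) hr.le,
          rpow_neg (by norm_num : (0 : ℝ) ≤ 2), mul_inv_cancel_left₀ (by positivity)]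
    _ ≤ 2 ^ d * X ^ (-d) * s⁻¹ := by
        have := rpow_le_rpow_of_nonpos hX h (neg_nonpos.2 hd)
        gcongr

lemma norm_sub_add_rpow_mul_one_add_sq_rpow_le {E : Type*} [SeminormedAddCommGroup E] (x y : E)
    {s d : ℝ} (hs : 0 < s) (hd : 0 ≤ d) :
    (‖x - y‖ + s) ^ (-(d + 1)) * (1 + ‖y‖ ^ 2) ^ (-d) ≤
      8 ^ d * (‖x‖ + s + 1) ^ (-d) * (‖x - y‖ + s) ^ (-(d + 1)) +
        2 ^ d * (‖x‖ + s + 1) ^ (-d) * s⁻¹ * (1 + ‖y‖ ^ 2) ^ (-d) := by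
  set X := ‖x‖ + s + 1
  have hX : 1 ≤ X := by have := norm_nonneg x; linarith
  have htri : X ≤ (1 + ‖y‖) + (‖x - y‖ + s) := by
    have := norm_le_norm_sub_add x y; linarith
  have hK : 0 ≤ (‖x - y‖ + s) ^ (-(d + 1)) := by positivity
  have hW : 0 ≤ (1 + ‖y‖ ^ 2) ^ (-d) := by positivity
  rcases le_or_gt X (2 * (1 + ‖y‖)) with hy | hxy
  · calc _ ≤ (‖x - y‖ + s) ^ (-(d + 1)) * (8 ^ d * X ^ (-d)) :=
          mul_le_mul_of_nonneg_left (one_add_sq_rpow_neg_le hd hX hy) hK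
      _ ≤ _ := by rw [mul_comm]; exact le_add_of_nonneg_right (by positivity)
  · calc _ ≤ 2 ^ d * X ^ (-d) * s⁻¹ * (1 + ‖y‖ ^ 2) ^ (-d) :=
          mul_le_mul_of_nonneg_right (rpow_neg_add_one_le hd hs
            (le_add_of_nonneg_left (norm_nonneg _)) (by linarith) (by linarith)) hW
      _ ≤ _ := le_add_of_nonneg_left (by positivity)

lemma norm_smul_add_rpow_neg {E : Type*} [SeminormedAddCommGroup E] [NormedSpace ℝ E] {s : ℝ}
    (hs : 0 ≤ s) (r : ℝ) (u : E) : (‖s • u‖ + s) ^ (-r) = s ^ (-r) * (1 + ‖u‖) ^ (-r) := by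
  rw [norm_smul, Real.norm_of_nonneg hs, ← mul_rpow hs (by positivity)]
  ring_nf

end Pointwise

section HaarMeasure

open Module (finrank)

variable {E : Type*} [NormedAddCommGroup E] [NormedSpace ℝ E] [FiniteDimensional ℝ E]
  [MeasurableSpace E] [BorelSpace E] {μ : Measure E} [μ.IsAddHaarMeasure] {n : ℕ}

theorem integrable_norm_sub_add_rpow_neg {r : ℝ} (hr : (finrank ℝ E : ℝ) < r) (x : E) {s : ℝ}
    (hs : 0 < s) : Integrable (fun y ↦ (‖x - y‖ + s) ^ (-r)) μ := by
  have h : Integrable (fun z : E ↦ (‖z‖ + s) ^ (-r)) μ := by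
    rw [← integrable_comp_smul_iff μ _ hs.ne']
    simpa only [norm_smul_add_rpow_neg hs.le] using (integrable_one_add_norm hr).const_mul _
  simpa only [norm_sub_rev x] using h.comp_sub_right x

theorem integral_norm_sub_add_rpow_neg (r : ℝ) (x : E) {s : ℝ} (hs : 0 < s) :
    ∫ y, (‖x - y‖ + s) ^ (-r) ∂μ = s ^ ((finrank ℝ E : ℝ) - r) * ∫ z, (1 + ‖z‖) ^ (-r) ∂μ := by
  have h := Measure.integral_comp_smul_of_nonneg μ (fun z ↦ (‖z‖ + s) ^ (-r)) s (hR := hs.le)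
  simp only [norm_smul_add_rpow_neg hs.le, integral_const_mul, smul_eq_mul] at h
  simp only [norm_sub_rev x]
  rw [integral_sub_right_eq_self (fun z ↦ (‖z‖ + s) ^ (-r)) x, sub_eq_add_neg, rpow_add hs,
    rpow_natCast, mul_assoc, h, mul_inv_cancel_left₀ (by positivity)]

theorem integrable_norm_sub_add_rpow_mul_one_add_sq_rpow {r b : ℝ}
    (hr : (finrank ℝ E : ℝ) < r) (hb : 0 ≤ b) (x : E) {s : ℝ} (hs : 0 < s) :
    Integrable (fun y ↦ (‖x - y‖ + s) ^ (-r) * (1 + ‖y‖ ^ 2) ^ (-b)) μ := by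
  refine (integrable_norm_sub_add_rpow_neg hr x hs).mul_bdd (c := 1)
    (by fun_prop : Measurable fun y : E ↦ (1 + ‖y‖ ^ 2) ^ (-b)).aestronglyMeasurable
    (ae_of_all _ fun y ↦ ?_)
  rw [norm_of_nonneg (by positivity)]
  exact rpow_le_one_of_one_le_of_nonpos (by nlinarith [sq_nonneg ‖y‖]) (neg_nonpos.2 hb)

theorem exists_integral_norm_sub_add_rpow_mul_one_add_sq_rpow_neg_finrank_le
    (hE : finrank ℝ E = n) (hn : 0 < n) :
    ∃ B, 0 ≤ B ∧ ∀ (x : E) {s : ℝ}, 0 < s →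
      ∫ y, (‖x - y‖ + s) ^ (-((n : ℝ) + 1)) * (1 + ‖y‖ ^ 2) ^ (-(n : ℝ)) ∂μ ≤
        B * s⁻¹ * (‖x‖ + s + 1) ^ (-(n : ℝ)) := by
  set C₁ := ∫ z, (1 + ‖z‖) ^ (-((n : ℝ) + 1)) ∂μ
  set C₂ := ∫ y, (1 + ‖y‖ ^ 2) ^ (-(n : ℝ)) ∂μ
  have hC₁ : 0 ≤ C₁ := integral_nonneg fun z ↦ by positivity
  have hC₂ : 0 ≤ C₂ := integral_nonneg fun z ↦ by positivity
  refine ⟨8 ^ (n : ℝ) * C₁ + 2 ^ (n : ℝ) * C₂, by positivity, fun x s hs ↦ ?_⟩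
  have hn' : (0 : ℝ) < n := Nat.cast_pos.2 hn
  have hK := integrable_norm_sub_add_rpow_neg (μ := μ) (r := (n : ℝ) + 1)
    (by rw [hE]; linarith) x hs
  have hW : Integrable (fun y : E ↦ (1 + ‖y‖ ^ 2) ^ (-(n : ℝ))) μ := by
    simpa [neg_div] using integrable_rpow_neg_one_add_norm_sq (μ := μ) (r := 2 * n)
      (by rw [hE]; linarith)
  calc _ ≤ ∫ y, (8 ^ (n : ℝ) * (‖x‖ + s + 1) ^ (-(n : ℝ)) * (‖x - y‖ + s) ^ (-((n : ℝ) + 1)) +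
          2 ^ (n : ℝ) * (‖x‖ + s + 1) ^ (-(n : ℝ)) * s⁻¹ * (1 + ‖y‖ ^ 2) ^ (-(n : ℝ))) ∂μ :=
        integral_mono_of_nonneg (ae_of_all _ fun y ↦ by positivity)
          ((hK.const_mul _).add (hW.const_mul _))
          (ae_of_all _ fun y ↦ norm_sub_add_rpow_mul_one_add_sq_rpow_le x y hs hn'.le)
    _ = (8 ^ (n : ℝ) * C₁ + 2 ^ (n : ℝ) * C₂) * s⁻¹ * (‖x‖ + s + 1) ^ (-(n : ℝ)) := by
        rw [integral_add (hK.const_mul _) (hW.const_mul _), integral_const_mul, integral_const_mul,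
          integral_norm_sub_add_rpow_neg _ x hs, hE, show (n : ℝ) - (n + 1) = -1 by ring,
          rpow_neg_one]
        ring

theorem exists_integral_norm_sub_add_rpow_mul_one_add_sq_rpow_le (hE : finrank ℝ E = n)
    (hn : 0 < n) {a : ℝ} (ha : 0 ≤ a) (han : a ≤ n) :
    ∃ C, 0 ≤ C ∧ ∀ (x : E) {s : ℝ}, 0 < s →
      ∫ y, (‖x - y‖ + s) ^ (-((n : ℝ) + 1)) * (1 + ‖y‖ ^ 2) ^ (-a) ∂μ ≤
        C * s⁻¹ * (‖x‖ + s + 1) ^ (-a) := by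
  obtain ⟨B, hB, hend⟩ :=
    exists_integral_norm_sub_add_rpow_mul_one_add_sq_rpow_neg_finrank_le (μ := μ) hE hn
  set A := ∫ z, (1 + ‖z‖) ^ (-((n : ℝ) + 1)) ∂μ
  have hA : 0 ≤ A := integral_nonneg fun z ↦ by positivity
  have hn' : (0 : ℝ) < n := Nat.cast_pos.2 hn
  set θ := a / n
  have hθ : 0 ≤ θ := by positivity
  have hθ1 : θ ≤ 1 := div_le_one_of_le₀ han hn'.le
  refine ⟨A ^ (1 - θ) * B ^ θ, by positivity, fun x s hs ↦ ?_⟩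
  set X := ‖x‖ + s + 1
  have hX : 0 < X := by positivity
  have hdim : (finrank ℝ E : ℝ) < n + 1 := by rw [hE]; linarith
  have hsplit : ∀ y : E, (‖x - y‖ + s) ^ (-((n : ℝ) + 1)) * (1 + ‖y‖ ^ 2) ^ (-a) =
      ((‖x - y‖ + s) ^ (-((n : ℝ) + 1))) ^ (1 - θ) *
        ((‖x - y‖ + s) ^ (-((n : ℝ) + 1)) * (1 + ‖y‖ ^ 2) ^ (-(n : ℝ))) ^ θ := by
    intro y
    have hK : 0 < (‖x - y‖ + s) ^ (-((n : ℝ) + 1)) := by positivity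
    rw [mul_rpow hK.le (by positivity), ← mul_assoc, ← rpow_add hK, sub_add_cancel, rpow_one,
      ← rpow_mul (by positivity), neg_mul, mul_div_cancel₀ _ hn'.ne']
  calc _ = ∫ y, ((‖x - y‖ + s) ^ (-((n : ℝ) + 1))) ^ (1 - θ) *
          ((‖x - y‖ + s) ^ (-((n : ℝ) + 1)) * (1 + ‖y‖ ^ 2) ^ (-(n : ℝ))) ^ θ ∂μ := by
        simp only [hsplit]
    _ ≤ (∫ y, (‖x - y‖ + s) ^ (-((n : ℝ) + 1)) ∂μ) ^ (1 - θ) *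
          (∫ y, (‖x - y‖ + s) ^ (-((n : ℝ) + 1)) * (1 + ‖y‖ ^ 2) ^ (-(n : ℝ)) ∂μ) ^ θ :=
        integral_rpow_mul_rpow_le (ae_of_all _ fun y ↦ by positivity)
          (ae_of_all _ fun y ↦ by positivity) (integrable_norm_sub_add_rpow_neg hdim x hs)
          (integrable_norm_sub_add_rpow_mul_one_add_sq_rpow hdim hn'.le x hs)
          (sub_nonneg.2 hθ1) hθ (sub_add_cancel 1 θ)
    _ ≤ (A * s⁻¹) ^ (1 - θ) * (B * s⁻¹ * X ^ (-(n : ℝ))) ^ θ := by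
        rw [integral_norm_sub_add_rpow_neg _ x hs, hE, show (n : ℝ) - (n + 1) = -1 by ring,
          rpow_neg_one, mul_comm s⁻¹]
        gcongr
        exact hend x hs
    _ = A ^ (1 - θ) * B ^ θ * (s⁻¹ ^ (1 - θ) * s⁻¹ ^ θ) * X ^ (-(n : ℝ) * θ) := by
        rw [mul_rpow hA (by positivity), mul_rpow (by positivity) (by positivity),
          mul_rpow hB (by positivity), ← rpow_mul hX.le]
        ring
    _ = A ^ (1 - θ) * B ^ θ * s⁻¹ * X ^ (-a) := by
        rw [← rpow_add (by positivity), sub_add_cancel, rpow_one, neg_mul,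
          mul_div_cancel₀ _ hn'.ne']

end HaarMeasure

/-- key integral estimate in the proof of Lemma 3.6: Let `n ≥ 2` and
`0 ≤ a ≤ n`. There is `C = C(n,a)` such that for all `x ∈ ℝⁿ₊` and `t > 0`,
`∫_{ℝⁿ₊} (|x−y|+√t)^(−(n+1)) ⟨y⟩^(−2a) dy ≤ C t^(−1/2) (|x|+√t+1)^(−a)`,
where `⟨y⟩^(−2a) = (1+|y|²)^(−a)`. -/
theorem kernel_int_decay (n : ℕ) (hn : 2 ≤ n) (a : ℝ) (ha : 0 ≤ a) (han : a ≤ n) :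
    ∃ C : ℝ, 0 < C ∧ ∀ x ∈ halfSpace n, ∀ t : ℝ, 0 < t →
      (∫ y in halfSpace n,
          (‖x - y‖ + Real.sqrt t) ^ (-((n : ℝ) + 1)) * (1 + ‖y‖ ^ 2) ^ (-a)) ≤
        C * t ^ (-(1 : ℝ) / 2) * (‖x‖ + Real.sqrt t + 1) ^ (-a) := by
  have hE : Module.finrank ℝ (Rn n) = n := finrank_euclideanSpace_fin
  obtain ⟨C, hC, hbound⟩ := exists_integral_norm_sub_add_rpow_mul_one_add_sq_rpow_le
    (μ := volume) hE (by omega) ha han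
  refine ⟨C + 1, by linarith, fun x _ t ht ↦ ?_⟩
  have hs : 0 < √t := sqrt_pos.2 ht
  have hdim : (Module.finrank ℝ (Rn n) : ℝ) < n + 1 := by rw [hE]; linarith
  rw [show t ^ (-(1 : ℝ) / 2) = (√t)⁻¹ by rw [neg_div, rpow_neg ht.le, sqrt_eq_rpow]]
  calc _ ≤ ∫ y, (‖x - y‖ + √t) ^ (-((n : ℝ) + 1)) * (1 + ‖y‖ ^ 2) ^ (-a) :=
        setIntegral_le_integral (integrable_norm_sub_add_rpow_mul_one_add_sq_rpow hdim ha x hs)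
          (ae_of_all _ fun y ↦ by positivity)
    _ ≤ C * (√t)⁻¹ * (‖x‖ + √t + 1) ^ (-a) := hbound x hs
    _ ≤ (C + 1) * (√t)⁻¹ * (‖x‖ + √t + 1) ^ (-a) := by gcongr; linarith
end
end
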